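/- arXiv:2509.12360 — 2 statements merged into one kernel-verified Lean document; each statement's English description precedes it below -/
import Mathlib

section
/- Let f : S → T be a minor embedding of rooted trees. If a, b ∈ V(S) and there is no directed path between a and b in S (in either direction), then there is no directed path between f(a) and f(b) in T (in either direction). -/
/-- A directed path in a graph `E`, given as a nonempty list of visited nodes
from `a` to `b` (endpoints included). A trivial path is `[a]` with `a = b`. -/
def IsPath {V : Type*} (E : V → V → Prop) (p : List V) (a b : V) : Prop :=
  p.Chain' E ∧ p.head? = some a ∧ p.getLast? = some b

/-- There is a (possibly trivial) directed path from `a` to `b`. -/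
def Reach {V : Type*} (E : V → V → Prop) (a b : V) : Prop :=
  ∃ p : List V, IsPath E p a b

/-- A rooted tree: a finite directed graph with root `r` such that every node is
reachable from `r` by a unique directed path (and there are no self-loops). -/
structure IsRootedTree {V : Type*} [Fintype V] (E : V → V → Prop) (r : V) : Prop where
  no_self : ∀ v, ¬ E v v
  reach : ∀ v, ∃ p : List V, IsPath E p r v
  path_unique : ∀ v (p q : List V), IsPath E p r v → IsPath E q r v → p = q

/-- A minor embedding `f : S → T`: an injective node map such that every arc `(a,b)`
of `S` maps to a directed path from `f a` to `f b` in `T` with no intermediate node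
in the image of `f`. -/
def IsMinorEmb {V W : Type*} (ES : V → V → Prop) (ET : W → W → Prop) (f : V → W) : Prop :=
  Function.Injective f ∧
    ∀ a b, ES a b → ∃ p : List W, IsPath ET p (f a) (f b) ∧
      ∀ x ∈ p.tail.dropLast, x ∉ Set.range f

/-!
A path `rS ⇝ b` in `S` maps to a path `f rS ⇝ f b` in `T` whose nodes in the image of `f`
are all images of nodes on the original path. Prefixing the root path `rT ⇝ f rS` gives
the unique root path of `f b` in `T`, which must contain every node that reaches `f b`.
So if `f a ⇝ f b`, then `f a` lies either on `rT ⇝ f rS`, forcing `f a = f rS` and `a = rS`,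
or on the image of `rS ⇝ b`, forcing `a` to lie on that path. Either way `a ⇝ b` in `S`.
-/

section Paths

variable {V : Type*} {E : V → V → Prop}

lemma isPath_singleton_iff {x a b : V} : IsPath E [x] a b ↔ x = a ∧ x = b :=
  ⟨fun h => ⟨by simpa using h.2.1, by simpa using h.2.2⟩,
    fun ⟨ha, hb⟩ => ⟨List.isChain_singleton x, by rw [ha]; rfl, by rw [hb]; rfl⟩⟩

lemma isPath_cons_cons_iff {x y a b : V} {t : List V} :
    IsPath E (x :: y :: t) a b ↔ x = a ∧ E x y ∧ IsPath E (y :: t) y b :=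
  ⟨fun ⟨hc, hh, hl⟩ => ⟨by simpa using hh, (List.isChain_cons_cons.1 hc).1,
      (List.isChain_cons_cons.1 hc).2, rfl, by rwa [List.getLast?_cons_cons] at hl⟩,
    fun ⟨ha, hxy, hc, _, hl⟩ => ⟨List.isChain_cons_cons.2 ⟨hxy, hc⟩, by rw [ha]; rfl,
      by rwa [List.getLast?_cons_cons]⟩⟩

lemma IsPath.append {p q : List V} {a b c : V} (hp : IsPath E p a b) (hq : IsPath E q b c) :
    IsPath E (p ++ q.tail) a c := by
  obtain ⟨hpc, hph, hpl⟩ := hp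
  obtain ⟨hqc, hqh, hql⟩ := hq
  obtain ⟨t, rfl⟩ := List.head?_eq_some_iff.1 hqh
  obtain ⟨s, rfl⟩ := List.head?_eq_some_iff.1 hph
  cases t with
  | nil =>
    obtain rfl : b = c := by simpa using hql
    exact ⟨by simpa using hpc, rfl, by simpa using hpl⟩
  | cons y t =>
    refine ⟨hpc.append hqc.tail ?_, rfl, ?_⟩
    · simp only [hpl, Option.mem_def, Option.some.injEq, List.tail_cons, List.head?_cons]
      rintro x rfl z rfl
      exact (List.isChain_cons_cons.1 hqc).1
    · rwa [List.tail_cons, List.getLast?_append_cons, ← List.getLast?_cons_cons (a := b)]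

lemma IsPath.reach_of_mem {p : List V} {a b x : V} (hp : IsPath E p a b) (hx : x ∈ p) :
    Reach E x b := by
  obtain ⟨s, t, rfl⟩ := List.append_of_mem hx
  exact ⟨x :: t, (List.isChain_append.1 hp.1).2.1, rfl,
    by rw [← List.getLast?_append_cons s]; exact hp.2.2⟩

lemma IsPath.mem_cases {p : List V} {a b x : V} (hp : IsPath E p a b) (hx : x ∈ p) :
    x = a ∨ x = b ∨ x ∈ p.tail.dropLast := by
  obtain ⟨t, rfl⟩ := List.head?_eq_some_iff.1 hp.2.1
  rcases List.mem_cons.1 hx with rfl | hxt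
  · exact Or.inl rfl
  have ht : t ≠ [] := List.ne_nil_of_mem hxt
  have hlast : t.getLast ht = b := by
    have := hp.2.2
    rw [List.getLast?_cons, List.getLast?_eq_some_getLast ht] at this
    simpa using this
  rw [← List.dropLast_append_getLast ht, hlast] at hxt
  simpa [or_comm, or_assoc] using Or.inr hxt

end Paths

namespace IsRootedTree

variable {V : Type*} [Fintype V] {E : V → V → Prop} {r : V}

lemma reach_antisymm (hT : IsRootedTree E r) {u v : V} (huv : Reach E u v) (hvu : Reach E v u) :
    u = v := by
  obtain ⟨p, hp⟩ := hT.reach u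
  obtain ⟨q, hq⟩ := huv
  obtain ⟨s, hs⟩ := hvu
  -- the root path of `u` extended by the loop `u ⇝ v ⇝ u` is again the root path of `u`
  have hlen := congrArg List.length (hT.path_unique u _ _ hp ((hp.append hq).append hs))
  obtain ⟨t, rfl⟩ := List.head?_eq_some_iff.1 hq.2.1
  obtain ⟨rfl, -⟩ : t = [] ∧ _ := by simpa using hlen
  simpa using hq.2.2

lemma mem_of_reach (hT : IsRootedTree E r) {p : List V} {u v : V} (hp : IsPath E p r v)
    (huv : Reach E u v) : u ∈ p := by
  obtain ⟨q, hq⟩ := hT.reach u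
  obtain ⟨s, hs⟩ := huv
  rw [hT.path_unique v _ _ hp (hq.append hs)]
  exact List.mem_append_left _ (List.mem_of_mem_getLast? hq.2.2)

end IsRootedTree

namespace IsMinorEmb

variable {VS VT : Type*} {ES : VS → VS → Prop} {ET : VT → VT → Prop} {f : VS → VT}

lemma exists_isPath_map (hf : IsMinorEmb ES ET f) {s : List VS} {c b : VS}
    (hs : IsPath ES s c b) :
    ∃ w : List VT, IsPath ET w (f c) (f b) ∧ ∀ x ∈ w, x ∈ Set.range f → ∃ d ∈ s, x = f d := by
  induction s generalizing c with
  | nil => simp [IsPath] at hs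
  | cons x t ih =>
    cases t with
    | nil =>
      obtain ⟨rfl, rfl⟩ := isPath_singleton_iff.1 hs
      exact ⟨[f x], isPath_singleton_iff.2 ⟨rfl, rfl⟩, by simp⟩
    | cons y t =>
      obtain ⟨rfl, hxy, hrest⟩ := isPath_cons_cons_iff.1 hs
      obtain ⟨seg, hseg, hinterior⟩ := hf.2 x y hxy
      obtain ⟨w, hw, hwmem⟩ := ih hrest
      refine ⟨seg ++ w.tail, hseg.append hw, fun z hz hzf => ?_⟩
      rcases List.mem_append.1 hz with hz | hz
      · rcases hseg.mem_cases hz with rfl | rfl | hz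
        · exact ⟨x, by simp, rfl⟩
        · exact ⟨y, by simp, rfl⟩
        · exact absurd hzf (hinterior z hz)
      · obtain ⟨d, hd, rfl⟩ := hwmem z (List.mem_of_mem_tail hz) hzf
        exact ⟨d, List.mem_cons_of_mem x hd, rfl⟩

lemma reach_map (hf : IsMinorEmb ES ET f) {a b : VS} (h : Reach ES a b) :
    Reach ET (f a) (f b) :=
  let ⟨_, hs⟩ := h
  let ⟨w, hw, _⟩ := hf.exists_isPath_map hs
  ⟨w, hw⟩

lemma reach_of_reach_map [Fintype VS] [Fintype VT] {rS : VS} {rT : VT}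
    (hS : IsRootedTree ES rS) (hT : IsRootedTree ET rT) (hf : IsMinorEmb ES ET f) {a b : VS}
    (h : Reach ET (f a) (f b)) : Reach ES a b := by
  obtain ⟨s, hs⟩ := hS.reach b
  obtain ⟨w, hw, hwmem⟩ := hf.exists_isPath_map hs
  obtain ⟨q, hq⟩ := hT.reach (f rS)
  rcases List.mem_append.1 (hT.mem_of_reach (hq.append hw) h) with hfa | hfa
  · have hfa_root : f a = f rS :=
      hT.reach_antisymm (hq.reach_of_mem hfa) (hf.reach_map (hS.reach a))
    rw [hf.1 hfa_root]
    exact ⟨s, hs⟩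
  · obtain ⟨d, hd, hfd⟩ := hwmem (f a) (List.mem_of_mem_tail hfa) ⟨a, rfl⟩
    rw [hf.1 hfd]
    exact hs.reach_of_mem hd

end IsMinorEmb

/-- Lemma 4: a minor embedding maps incomparable nodes to incomparable nodes.
If there is no directed path between `a` and `b` in `S` (in either direction),
then there is no directed path between `f a` and `f b` in `T` (in either direction). -/
theorem stmt4 {VS VT : Type*} [Fintype VS] [Fintype VT]
    (ES : VS → VS → Prop) (rS : VS) (ET : VT → VT → Prop) (rT : VT)
    (hS : IsRootedTree ES rS) (hT : IsRootedTree ET rT)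
    (f : VS → VT) (hf : IsMinorEmb ES ET f)
    (a b : VS) (hab : ¬ Reach ES a b) (hba : ¬ Reach ES b a) :
    ¬ Reach ET (f a) (f b) ∧ ¬ Reach ET (f b) (f a) :=
  ⟨fun h => hab (hf.reach_of_reach_map hS hT h), fun h => hba (hf.reach_of_reach_map hS hT h)⟩
end

section
/- For any two nonempty rooted trees T₁ and T₂, a smallest common supertree T_σ under minor embeddings satisfies |V(T_σ)| ≤ |V(T₁)| + |V(T₂)| + 1. -/
/-- There is a common minor of `T₁` and `T₂` with `n` nodes. -/
def CommonMinorSize {V1 V2 : Type*} (E1 : V1 → V1 → Prop) (E2 : V2 → V2 → Prop)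
    (n : ℕ) : Prop :=
  ∃ (E : Fin n → Fin n → Prop) (r : Fin n), IsRootedTree E r ∧
    (∃ f : Fin n → V1, IsMinorEmb E E1 f) ∧ (∃ g : Fin n → V2, IsMinorEmb E E2 g)

/-- There is a common supertree of `T₁` and `T₂` with `n` nodes. -/
def CommonSupSize {V1 V2 : Type*} (E1 : V1 → V1 → Prop) (E2 : V2 → V2 → Prop)
    (n : ℕ) : Prop :=
  ∃ (E : Fin n → Fin n → Prop) (r : Fin n), IsRootedTree E r ∧
    (∃ f : V1 → Fin n, IsMinorEmb E1 E f) ∧ (∃ g : V2 → Fin n, IsMinorEmb E2 E g)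


/-!
Hang `T₁` and `T₂` below a fresh root. The result is a rooted tree on
`|V(T₁)| + |V(T₂)| + 1` nodes containing both trees as subtrees, hence as minors, so a smallest
common supertree is no larger.
-/

section Paths

variable {V W : Type*} {E : V → V → Prop} {E' : W → W → Prop}

theorem isPath_singleton {a b : V} : IsPath E [a] a b ↔ a = b :=
  ⟨fun h => by simpa using h.2.2, fun h => h ▸ ⟨List.isChain_singleton a, rfl, rfl⟩⟩

theorem isPath_cons_cons {a a' b c : V} {l : List V} :
    IsPath E (a :: b :: l) a' c ↔ a = a' ∧ E a b ∧ IsPath E (b :: l) b c := by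
  rw [IsPath, IsPath, List.getLast?_cons_cons]
  exact ⟨fun ⟨hc, hh, hl⟩ => ⟨by simpa using hh, (List.isChain_cons_cons.1 hc).1,
      (List.isChain_cons_cons.1 hc).2, rfl, hl⟩,
    fun ⟨ha, hab, hc, _, hl⟩ => ⟨List.isChain_cons_cons.2 ⟨hab, hc⟩, by rw [ha]; rfl, hl⟩⟩

theorem IsPath.cons {a b c : V} {p : List V} (h : E a b) (hp : IsPath E p b c) :
    IsPath E (a :: p) a c := by
  obtain _ | ⟨b', p⟩ := p
  · simp [IsPath] at hp
  · obtain rfl : b' = b := by simpa using hp.2.1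
    exact isPath_cons_cons.2 ⟨rfl, h, hp⟩

theorem IsPath.map {g : V → W} (hg : ∀ a b, E a b → E' (g a) (g b)) {p : List V} {a b : V}
    (h : IsPath E p a b) : IsPath E' (p.map g) (g a) (g b) := by
  obtain ⟨hc, hh, hl⟩ := h
  exact ⟨List.isChain_map_of_isChain _ hg hc, by simp [hh], by simp [hl]⟩

theorem IsPath.exists_eq_map {g : V → W} (hg : ∀ a y, E' (g a) y → ∃ b, y = g b ∧ E a b) :
    ∀ {l : List W} {a : V} {w : W}, IsPath E' l (g a) w →
      ∃ p v, w = g v ∧ IsPath E p a v ∧ l = p.map g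
  | [], _, _, h => by simp [IsPath] at h
  | [x], a, w, h => by
    obtain rfl : x = g a := by simpa using h.2.1
    obtain rfl := isPath_singleton.1 h
    exact ⟨[a], a, rfl, isPath_singleton.2 rfl, rfl⟩
  | x :: y :: l, a, w, h => by
    obtain ⟨rfl, hxy, hrest⟩ := isPath_cons_cons.1 h
    obtain ⟨b, rfl, hab⟩ := hg a y hxy
    obtain ⟨p, v, rfl, hp, hl⟩ := IsPath.exists_eq_map hg hrest
    exact ⟨a :: p, v, rfl, hp.cons hab, by rw [List.map_cons, ← hl]⟩

end Paths

section Embeddings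

variable {V W X : Type*} {E : V → V → Prop}

theorem IsRootedTree.equiv [Fintype V] [Fintype X] {r : V} (h : IsRootedTree E r) (e : V ≃ X) :
    IsRootedTree (fun a b => E (e.symm a) (e.symm b)) (e r) where
  no_self v := h.no_self _
  reach v := by
    obtain ⟨p, hp⟩ := h.reach (e.symm v)
    exact ⟨p.map e, by simpa using hp.map (g := e) (by simp)⟩
  path_unique v p q hp hq := by
    have hpull : ∀ {s : List X}, IsPath (fun a b => E (e.symm a) (e.symm b)) s (e r) v →
        IsPath E (s.map e.symm) r (e.symm v) := fun hs => by
      simpa using hs.map (g := e.symm) fun _ _ hab => hab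
    exact List.map_injective_iff.2 e.symm.injective (h.path_unique _ _ _ (hpull hp) (hpull hq))

theorem IsMinorEmb.comp_equiv {A : Type*} {E₀ : A → A → Prop} {E : W → W → Prop} {f : A → W}
    (h : IsMinorEmb E₀ E f) (e : W ≃ X) :
    IsMinorEmb E₀ (fun a b => E (e.symm a) (e.symm b)) (e ∘ f) := by
  obtain ⟨hinj, harc⟩ := h
  refine ⟨e.injective.comp hinj, fun a b hab => ?_⟩
  obtain ⟨p, hp, hint⟩ := harc a b hab
  refine ⟨p.map e, hp.map (by simp), ?_⟩
  rw [← List.map_tail, ← List.map_dropLast]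
  rintro _ hx ⟨c, hc⟩
  obtain ⟨y, hy, rfl⟩ := List.mem_map.1 hx
  exact hint y hy ⟨c, e.injective hc⟩

theorem isMinorEmb_of_arc {E' : W → W → Prop} {g : V → W}
    (hinj : Function.Injective g) (hg : ∀ a b, E a b → E' (g a) (g b)) : IsMinorEmb E E' g :=
  ⟨hinj, fun a b hab => ⟨[g a, g b], isPath_cons_cons.2 ⟨rfl, hg a b hab, isPath_singleton.2 rfl⟩,
    by simp⟩⟩

theorem commonSupSize_card [Fintype W] {V1 V2 : Type*} {E1 : V1 → V1 → Prop}
    {E2 : V2 → V2 → Prop} {E : W → W → Prop} {r : W} (h : IsRootedTree E r) {f : V1 → W}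
    {g : V2 → W} (hf : IsMinorEmb E1 E f) (hg : IsMinorEmb E2 E g) :
    CommonSupSize E1 E2 (Fintype.card W) :=
  let e := Fintype.equivFin W
  ⟨_, _, h.equiv e, ⟨_, hf.comp_equiv e⟩, ⟨_, hg.comp_equiv e⟩⟩

end Embeddings

section RootedJoin

variable {V1 V2 : Type*} (E1 : V1 → V1 → Prop) (r1 : V1) (E2 : V2 → V2 → Prop) (r2 : V2)

def rootedJoin : Option (V1 ⊕ V2) → Option (V1 ⊕ V2) → Prop
  | none, some (.inl b) => b = r1
  | none, some (.inr b) => b = r2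
  | some (.inl a), some (.inl b) => E1 a b
  | some (.inr a), some (.inr b) => E2 a b
  | _, _ => False

variable {E1 r1 E2 r2}

theorem exists_eq_inl_of_rootedJoin (a : V1) (y : Option (V1 ⊕ V2))
    (h : rootedJoin E1 r1 E2 r2 (some (.inl a)) y) :
    ∃ b, y = some (.inl b) ∧ E1 a b := by
  rcases y with _ | b | b
  exacts [h.elim, ⟨b, rfl, h⟩, h.elim]

theorem exists_eq_inr_of_rootedJoin (a : V2) (y : Option (V1 ⊕ V2))
    (h : rootedJoin E1 r1 E2 r2 (some (.inr a)) y) :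
    ∃ b, y = some (.inr b) ∧ E2 a b := by
  rcases y with _ | b | b
  exacts [h.elim, h.elim, ⟨b, rfl, h⟩]

theorem isPath_rootedJoin_inl {p : List V1} {v : V1} (hp : IsPath E1 p r1 v) :
    IsPath (rootedJoin E1 r1 E2 r2) (none :: p.map (some ∘ Sum.inl)) none (some (.inl v)) :=
  IsPath.cons (b := some (Sum.inl r1)) (rfl : r1 = r1) (hp.map (g := some ∘ Sum.inl) fun _ _ h => h)

theorem isPath_rootedJoin_inr {p : List V2} {v : V2} (hp : IsPath E2 p r2 v) :
    IsPath (rootedJoin E1 r1 E2 r2) (none :: p.map (some ∘ Sum.inr)) none (some (.inr v)) :=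
  IsPath.cons (b := some (Sum.inr r2)) (rfl : r2 = r2) (hp.map (g := some ∘ Sum.inr) fun _ _ h => h)

theorem IsPath.rootedJoin_cases {p : List (Option (V1 ⊕ V2))} {t : Option (V1 ⊕ V2)}
    (hp : IsPath (rootedJoin E1 r1 E2 r2) p none t) :
    (t = none ∧ p = [none]) ∨
    (∃ v q, t = some (.inl v) ∧ IsPath E1 q r1 v ∧ p = none :: q.map (some ∘ Sum.inl)) ∨
    (∃ v q, t = some (.inr v) ∧ IsPath E2 q r2 v ∧ p = none :: q.map (some ∘ Sum.inr)) := by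
  rcases p with _ | ⟨x, _ | ⟨y, l⟩⟩
  · simp [IsPath] at hp
  · obtain rfl : x = none := by simpa using hp.2.1
    obtain rfl := isPath_singleton.1 hp
    exact .inl ⟨rfl, rfl⟩
  · obtain ⟨rfl, hxy, hrest⟩ := isPath_cons_cons.1 hp
    rcases y with _ | b | b
    · exact hxy.elim
    · obtain rfl : b = r1 := hxy
      obtain ⟨q, v, rfl, hq, hl⟩ :=
        hrest.exists_eq_map (g := some ∘ Sum.inl) (E := E1) exists_eq_inl_of_rootedJoin
      exact .inr (.inl ⟨v, q, rfl, hq, by rw [hl]⟩)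
    · obtain rfl : b = r2 := hxy
      obtain ⟨q, v, rfl, hq, hl⟩ :=
        hrest.exists_eq_map (g := some ∘ Sum.inr) (E := E2) exists_eq_inr_of_rootedJoin
      exact .inr (.inr ⟨v, q, rfl, hq, by rw [hl]⟩)

theorem isRootedTree_rootedJoin [Fintype V1] [Fintype V2]
    (h1 : IsRootedTree E1 r1) (h2 : IsRootedTree E2 r2) :
    IsRootedTree (rootedJoin E1 r1 E2 r2) none where
  no_self
    | none => id
    | some (.inl a) => h1.no_self a
    | some (.inr a) => h2.no_self a
  reach
    | none => ⟨[none], isPath_singleton.2 rfl⟩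
    | some (.inl v) => let ⟨_, hp⟩ := h1.reach v; ⟨_, isPath_rootedJoin_inl hp⟩
    | some (.inr v) => let ⟨_, hp⟩ := h2.reach v; ⟨_, isPath_rootedJoin_inr hp⟩
  path_unique v p q hp hq := by
    rcases hp.rootedJoin_cases with ⟨rfl, rfl⟩ | ⟨w, s, rfl, hs, rfl⟩ | ⟨w, s, rfl, hs, rfl⟩ <;>
      rcases hq.rootedJoin_cases with
        ⟨ht, rfl⟩ | ⟨w', s', ht, hs', rfl⟩ | ⟨w', s', ht, hs', rfl⟩ <;>
      simp only [reduceCtorEq, Option.some.injEq, Sum.inl.injEq, Sum.inr.injEq] at ht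
    · rfl
    · subst ht; rw [h1.path_unique w s s' hs hs']
    · subst ht; rw [h2.path_unique w s s' hs hs']

theorem commonSupSize_rootedJoin [Fintype V1] [Fintype V2]
    (h1 : IsRootedTree E1 r1) (h2 : IsRootedTree E2 r2) :
    CommonSupSize E1 E2 (Fintype.card V1 + Fintype.card V2 + 1) := by
  have h := commonSupSize_card (isRootedTree_rootedJoin h1 h2)
    (isMinorEmb_of_arc (g := some ∘ Sum.inl) (Option.some_injective _ |>.comp Sum.inl_injective)
      fun _ _ h => h)
    (isMinorEmb_of_arc (g := some ∘ Sum.inr) (Option.some_injective _ |>.comp Sum.inr_injective)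
      fun _ _ h => h)
  rwa [Fintype.card_option, Fintype.card_sum] at h

end RootedJoin

theorem stmt15_general {V1 V2 Vsig : Type*} [Fintype V1] [Fintype V2] [Fintype Vsig]
    (E1 : V1 → V1 → Prop) (r1 : V1) (E2 : V2 → V2 → Prop) (r2 : V2)
    (h1 : IsRootedTree E1 r1) (h2 : IsRootedTree E2 r2)
    (hsigMin : ∀ m : ℕ, CommonSupSize E1 E2 m → Fintype.card Vsig ≤ m) :
    Fintype.card Vsig ≤ Fintype.card V1 + Fintype.card V2 + 1 :=
  hsigMin _ (commonSupSize_rootedJoin h1 h2)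

/-- A smallest common supertree of `T₁` and `T₂` under minor embeddings has at most
`|V(T₁)| + |V(T₂)| + 1` nodes. -/
theorem stmt15 {V1 V2 Vsig : Type*} [Fintype V1] [Fintype V2] [Fintype Vsig]
    (E1 : V1 → V1 → Prop) (r1 : V1) (E2 : V2 → V2 → Prop) (r2 : V2)
    (Esig : Vsig → Vsig → Prop) (rsig : Vsig)
    (h1 : IsRootedTree E1 r1) (h2 : IsRootedTree E2 r2)
    (hsig : IsRootedTree Esig rsig)
    (f1 : V1 → Vsig) (f2 : V2 → Vsig)
    (hf1 : IsMinorEmb E1 Esig f1) (hf2 : IsMinorEmb E2 Esig f2)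
    (hsigMin : ∀ m : ℕ, CommonSupSize E1 E2 m → Fintype.card Vsig ≤ m) :
    Fintype.card Vsig ≤ Fintype.card V1 + Fintype.card V2 + 1 :=
  stmt15_general E1 r1 E2 r2 h1 h2 hsigMin
end
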